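/- Consider the 1-hop-max RGCR scheme with independent cluster-level randomization at treatment probability p ∈ (0,1), on a graph with n nodes, maximum degree d_max, and restricted growth coefficient κ, and suppose every potential outcome satisfies 0 ≤ Y_i(1) ≤ Ȳ and 0 ≤ Y_i(0) ≤ Ȳ. Then the variance of the Horvitz–Thompson GATE estimator satisfies Var(τ̂) ≤ (2/n) · Ȳ² (d_max + 1)² κ⁴ (p^{−1} + (1−p)^{−1}). -/

import Mathlib

open MeasureTheory ProbabilityTheory Filter SimpleGraph Set

noncomputable section

/-- The `r`-hop ball around node `i`: all nodes at graph distance at most `r`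
(using the extended graph distance, so unreachable nodes are excluded). -/
def hopBall {V : Type*} (G : SimpleGraph V) (i : V) (r : ℕ) : Set V :=
  {j | G.edist i j ≤ r}

/-- The full-neighborhood exposure event in the 1-hop-max RGCR scheme: every node
`j` in the closed neighborhood `B₁(i)` has treatment status `b`, i.e. the cluster
center of `j` (the node `v ∈ B₁(j)` achieving the 1-hop max of `X`) has `Z v = b`. -/
def exposure {V Ω : Type*} (G : SimpleGraph V) (X : V → Ω → ℝ) (Z : V → Ω → Bool)
    (b : Bool) (i : V) : Set Ω :=
  {ω | ∀ j ∈ hopBall G i 1, ∃ v ∈ hopBall G j 1,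
      (∀ u ∈ hopBall G j 1, X u ω ≤ X v ω) ∧ Z v ω = b}

/-- The 1-hop-max RGCR model with independent cluster-level randomization:
the `X v` are i.i.d. uniform on `[0,1]`, the `Z v` are i.i.d. Bernoulli(`p`),
and the family `X` is independent of the family `Z`. -/
structure RGCRModel {V Ω : Type*} [MeasurableSpace Ω]
    (X : V → Ω → ℝ) (Z : V → Ω → Bool) (μ : Measure Ω) (p : ℝ) : Prop where
  meas_X : ∀ v, Measurable (X v)
  meas_Z : ∀ v, Measurable (Z v)
  law_X : ∀ v, μ.map (X v) = volume.restrict (Set.Icc (0:ℝ) 1)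
  law_Z : ∀ v, μ {ω | Z v ω = true} = ENNReal.ofReal p
  indep_X : iIndepFun X μ
  indep_Z : iIndepFun Z μ
  indep_XZ : IndepFun (fun ω v => X v ω) (fun ω v => Z v ω) μ

/-!
Write `E_b(i)` for the exposure event and `p_b` for `p` or `1 - p`. The estimator of arm `b` is
`n⁻¹ ∑ᵢ Yᵢ 1{E_b(i)} / P(E_b(i))`. The event `E_b(i)` is determined by the pairs `(X v, Z v)`
with `v ∈ B₂(i)`, and these pairs are independent across nodes, so the summands of two nodes
at distance more than `4` are independent and the variance is a sum of at most
`|B₄(i)| ≤ κ³ (d_max + 1)` covariances per node, each bounded by `Ȳ² / P(E_b(i))`.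
The event `E_b(i)` contains "`X i` is maximal on `B₂(i)` and `Z i = b`"; by exchangeability
of the i.i.d. `X v` and independence of `X` and `Z`, this has probability at least
`p_b / |B₂(i)| ≥ p_b / (κ (d_max + 1))`. The two arms combine through
`Var (A - B) ≤ 2 Var A + 2 Var B`.
-/

section HopBall

variable {V : Type*} {G : SimpleGraph V}

lemma mem_hopBall_self (G : SimpleGraph V) (i : V) (r : ℕ) : i ∈ hopBall G i r := by
  simp [hopBall]

lemma mem_hopBall_comm {i j : V} {r : ℕ} : j ∈ hopBall G i r ↔ i ∈ hopBall G j r := by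
  simp [hopBall, SimpleGraph.edist_comm]

lemma hopBall_subset_hopBall_add {i j : V} {r s : ℕ} (hj : j ∈ hopBall G i r) :
    hopBall G j s ⊆ hopBall G i (r + s) := fun u hu =>
  calc G.edist i u ≤ G.edist i j + G.edist j u := G.edist_triangle
    _ ≤ r + s := add_le_add hj hu
    _ = ((r + s : ℕ) : ℕ∞) := by push_cast; rfl

lemma disjoint_hopBall_of_notMem {i j : V} {r s : ℕ} (hij : j ∉ hopBall G i (r + s)) :
    Disjoint (hopBall G i r) (hopBall G j s) :=
  Set.disjoint_left.mpr fun _ hu hu' =>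
    hij (hopBall_subset_hopBall_add hu (mem_hopBall_comm.mp hu'))

lemma hopBall_one_subset_insert_neighborSet (i : V) :
    hopBall G i 1 ⊆ insert i (G.neighborSet i) := by
  intro j hj
  rcases eq_or_ne (G.edist i j) 0 with h0 | h0
  · exact .inl (SimpleGraph.edist_eq_zero_iff.mp h0).symm
  · exact .inr (SimpleGraph.edist_eq_one_iff_adj.mp
      (le_antisymm hj (Order.one_le_iff_ne_zero.mpr h0)))

variable [Fintype V]

lemma one_le_ncard_hopBall (i : V) (r : ℕ) : 1 ≤ (hopBall G i r).ncard :=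
  (Set.ncard_pos).mpr ⟨i, mem_hopBall_self G i r⟩

lemma ncard_hopBall_one_le [DecidableRel G.Adj] (i : V) :
    (hopBall G i 1).ncard ≤ G.maxDegree + 1 :=
  calc (hopBall G i 1).ncard ≤ (insert i (G.neighborSet i)).ncard :=
        Set.ncard_le_ncard (hopBall_one_subset_insert_neighborSet i)
    _ ≤ (G.neighborSet i).ncard + 1 := Set.ncard_insert_le _ _
    _ = G.degree i + 1 := by
        rw [Set.ncard_eq_toFinset_card', ← G.card_neighborFinset_eq_degree]; rfl
    _ ≤ G.maxDegree + 1 := Nat.add_le_add_right (G.degree_le_maxDegree i) 1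

end HopBall

section Growth

variable {V : Type*} [Fintype V] {G : SimpleGraph V} {κ : ℝ}

def HasRestrictedGrowth (G : SimpleGraph V) (κ : ℝ) : Prop :=
  ∀ (j : V) (r : ℕ), 1 ≤ r →
    ((hopBall G j (r + 1)).ncard : ℝ) ≤ κ * ((hopBall G j r).ncard : ℝ)

lemma HasRestrictedGrowth.pos (hκ : HasRestrictedGrowth G κ) (i : V) : 0 < κ := by
  have h1 : (1 : ℝ) ≤ (hopBall G i 1).ncard := by exact_mod_cast one_le_ncard_hopBall i 1
  have h2 : (1 : ℝ) ≤ (hopBall G i 2).ncard := by exact_mod_cast one_le_ncard_hopBall i 2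
  nlinarith [hκ i 1 le_rfl]

lemma HasRestrictedGrowth.ncard_hopBall_le [DecidableRel G.Adj] (hκ : HasRestrictedGrowth G κ)
    (i : V) {r : ℕ} (hr : 1 ≤ r) :
    ((hopBall G i r).ncard : ℝ) ≤ κ ^ (r - 1) * ((G.maxDegree : ℝ) + 1) := by
  induction r, hr using Nat.le_induction with
  | base => simpa using (Nat.cast_le (α := ℝ)).mpr (ncard_hopBall_one_le (G := G) i)
  | succ r hr ih =>
    calc ((hopBall G i (r + 1)).ncard : ℝ) ≤ κ * (hopBall G i r).ncard := hκ i r hr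
      _ ≤ κ * (κ ^ (r - 1) * ((G.maxDegree : ℝ) + 1)) := by gcongr; exact (hκ.pos i).le
      _ = κ ^ (r + 1 - 1) * ((G.maxDegree : ℝ) + 1) := by
        rw [← mul_assoc, ← pow_succ', Nat.sub_add_cancel hr, Nat.add_sub_cancel]

end Growth

section HorvitzThompson

variable {Ω ι : Type*} [MeasurableSpace Ω] {μ : Measure Ω} {E F : Set Ω} {y : ℝ}

def htTerm (μ : Measure Ω) (E : Set Ω) (y : ℝ) (ω : Ω) : ℝ :=
  y * E.indicator (fun _ => (1 : ℝ)) ω / μ.real E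

lemma htTerm_eq_indicator : htTerm μ E y = E.indicator (fun _ => y / μ.real E) := by
  ext ω
  by_cases hω : ω ∈ E <;> simp [htTerm, hω]

lemma htTerm_nonneg (hy : 0 ≤ y) : 0 ≤ htTerm μ E y := by
  rw [htTerm_eq_indicator]
  exact Set.indicator_nonneg (fun _ _ => by positivity)

lemma htTerm_le (hy : 0 ≤ y) (ω : Ω) : htTerm μ E y ω ≤ y / μ.real E := by
  rw [htTerm_eq_indicator]
  exact Set.indicator_le_self' (fun _ _ => by positivity) ω

lemma memLp_htTerm [IsFiniteMeasure μ] (hE : MeasurableSet E) : MemLp (htTerm μ E y) 2 μ := by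
  rw [htTerm_eq_indicator]
  exact memLp_indicator_const 2 hE _ (.inr (measure_ne_top μ E))

lemma integral_htTerm [IsFiniteMeasure μ] (hE : MeasurableSet E) (hE0 : μ E ≠ 0) :
    μ[htTerm μ E y] = y := by
  have : μ.real E ≠ 0 := (ENNReal.toReal_pos hE0 (measure_ne_top μ E)).ne'
  rw [htTerm_eq_indicator, integral_indicator_const _ hE, smul_eq_mul]
  field_simp

lemma indepFun_htTerm {y' : ℝ} (h : IndepSet E F μ) :
    IndepFun (htTerm μ E y) (htTerm μ F y') μ := by
  rw [IndepSet_iff_Indep] at h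
  rw [IndepFun_iff_Indep, htTerm_eq_indicator, htTerm_eq_indicator]
  refine indep_of_indep_of_le_left (indep_of_indep_of_le_right h ?_) ?_ <;>
    exact (measurable_const.indicator
      (MeasurableSpace.measurableSet_generateFrom (Set.mem_singleton _))).comap_le

lemma covariance_le_mul_integral [IsProbabilityMeasure μ] {f g : Ω → ℝ} {c : ℝ}
    (hf : MemLp f 2 μ) (hg : MemLp g 2 μ) (hf0 : 0 ≤ f) (hfc : ∀ ω, f ω ≤ c) (hg0 : 0 ≤ g) :
    cov[f, g; μ] ≤ c * μ[g] := by
  have hfg : μ[f * g] ≤ c * μ[g] :=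
    (integral_mono (hf.integrable_mul hg) ((hg.integrable one_le_two).const_mul c)
      fun ω => mul_le_mul_of_nonneg_right (hfc ω) (hg0 ω)).trans_eq (integral_const_mul c g)
  rw [covariance_eq_sub hf hg]
  linarith [mul_nonneg (integral_nonneg (μ := μ) hf0) (integral_nonneg (μ := μ) hg0)]

lemma variance_sub_le_two_mul_add [IsFiniteMeasure μ] {f g : Ω → ℝ} (hf : MemLp f 2 μ)
    (hg : MemLp g 2 μ) : Var[f - g; μ] ≤ 2 * Var[f; μ] + 2 * Var[g; μ] := by
  rw [variance_sub hf hg]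
  linarith [variance_add hf hg, variance_nonneg (f + g) μ]

lemma variance_sum_eq_sum_covariance_of_indepFun [IsFiniteMeasure μ] [Fintype ι]
    {f : ι → Ω → ℝ} (hf : ∀ i, MemLp (f i) 2 μ) (N : ι → Finset ι)
    (hN : ∀ i j, j ∉ N i → IndepFun (f i) (f j) μ) :
    Var[fun ω => ∑ i, f i ω; μ] = ∑ i, ∑ j ∈ N i, cov[f i, f j; μ] := by
  rw [variance_fun_sum hf]
  refine Finset.sum_congr rfl fun i _ => ?_
  exact (Finset.sum_subset (Finset.subset_univ _)
    fun j _ hj => (hN i j hj).covariance_eq_zero (hf i) (hf j)).symm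

lemma variance_sum_htTerm_le [IsProbabilityMeasure μ] [Fintype ι] {E : ι → Set Ω}
    (hE : ∀ i, MeasurableSet (E i)) (hE0 : ∀ i, μ (E i) ≠ 0) {Y : ι → ℝ} {Ybar : ℝ}
    (hY : ∀ i, Y i ∈ Icc 0 Ybar) (N : ι → Finset ι)
    (hN : ∀ i j, j ∉ N i → IndepSet (E i) (E j) μ) :
    Var[fun ω => ∑ i, htTerm μ (E i) (Y i) ω; μ]
      ≤ ∑ i, (N i).card * (Ybar ^ 2 / μ.real (E i)) := by
  rw [variance_sum_eq_sum_covariance_of_indepFun (fun i => memLp_htTerm (hE i)) N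
    fun i j hij => indepFun_htTerm (hN i j hij)]
  refine Finset.sum_le_sum fun i _ => ?_
  rw [← nsmul_eq_mul]
  refine Finset.sum_le_card_nsmul _ _ _ fun j _ => ?_
  have hπ : 0 < μ.real (E i) := ENNReal.toReal_pos (hE0 i) (measure_ne_top μ _)
  calc cov[htTerm μ (E i) (Y i), htTerm μ (E j) (Y j); μ]
      ≤ Y i / μ.real (E i) * μ[htTerm μ (E j) (Y j)] :=
        covariance_le_mul_integral (memLp_htTerm (hE i)) (memLp_htTerm (hE j))
          (htTerm_nonneg (hY i).1) (htTerm_le (hY i).1) (htTerm_nonneg (hY j).1)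
    _ = Y i * Y j / μ.real (E i) := by rw [integral_htTerm (hE j) (hE0 j)]; ring
    _ ≤ Ybar ^ 2 / μ.real (E i) := by
        gcongr
        rw [sq]
        exact mul_le_mul (hY i).2 (hY j).2 (hY j).1 ((hY i).1.trans (hY i).2)

end HorvitzThompson

section Independence

variable {Ω ι β γ : Type*} [MeasurableSpace Ω] {μ : Measure Ω} [IsProbabilityMeasure μ]
  [Fintype ι] [MeasurableSpace β] [MeasurableSpace γ]

lemma iIndepFun_prodMk_of_indepFun {X : ι → Ω → β} {Z : ι → Ω → γ}
    (hXm : ∀ i, Measurable (X i)) (hZm : ∀ i, Measurable (Z i))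
    (hX : iIndepFun X μ) (hZ : iIndepFun Z μ)
    (hXZ : IndepFun (fun ω i => X i ω) (fun ω i => Z i ω) μ) :
    iIndepFun (fun i ω => (X i ω, Z i ω)) μ := by
  rw [iIndepFun_iff_map_fun_eq_pi_map fun i => ((hXm i).prodMk (hZm i)).aemeasurable]
  have hmarginal : ∀ i, μ.map (fun ω => (X i ω, Z i ω)) = (μ.map (X i)).prod (μ.map (Z i)) :=
    fun i => (hXZ.comp (measurable_pi_apply i) (measurable_pi_apply i)).map_prod_eq_prod_map_map
      (hXm i).aemeasurable (hZm i).aemeasurable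
  have hjoint : μ.map (fun ω => ((fun i => X i ω), (fun i => Z i ω)))
      = (Measure.pi fun i => μ.map (X i)).prod (Measure.pi fun i => μ.map (Z i)) := by
    rw [hXZ.map_prod_eq_prod_map_map (measurable_pi_lambda _ hXm).aemeasurable
        (measurable_pi_lambda _ hZm).aemeasurable,
      hX.map_fun_eq_pi_map fun i => (hXm i).aemeasurable,
      hZ.map_fun_eq_pi_map fun i => (hZm i).aemeasurable]
  simp_rw [hmarginal]
  rw [← (measurePreserving_arrowProdEquivProdArrow β γ ι _ _).symm.map_eq, ← hjoint,
    Measure.map_map (MeasurableEquiv.measurable _)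
      ((measurable_pi_lambda _ hXm).prodMk (measurable_pi_lambda _ hZm))]
  rfl

end Independence

section Exchangeability

variable {Ω ι β : Type*} [MeasurableSpace Ω] {μ : Measure Ω} [MeasurableSpace β]

lemma measurableSet_setOf_forall_le [Countable ι] (S : Set ι) (w : ι) :
    MeasurableSet {x : ι → ℝ | ∀ u ∈ S, x u ≤ x w} := by
  simp only [Set.ofPred_forall]
  exact .iInter fun u => .iInter fun _ =>
    measurableSet_le (measurable_pi_apply u) (measurable_pi_apply w)

variable [Fintype ι]

lemma map_fun_perm_eq_of_iIndepFun {X : ι → Ω → β} (hXm : ∀ i, Measurable (X i))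
    (hX : iIndepFun X μ) (hident : ∀ i j, μ.map (X i) = μ.map (X j)) (σ : Equiv.Perm ι) :
    μ.map (fun ω i => X (σ i) ω) = μ.map (fun ω i => X i ω) := by
  rw [(hX.precomp σ.injective).map_fun_eq_pi_map fun i => (hXm _).aemeasurable,
    hX.map_fun_eq_pi_map fun i => (hXm i).aemeasurable]
  exact congrArg Measure.pi (funext fun i => hident _ _)

variable [DecidableEq ι] {X : ι → Ω → ℝ}

lemma measure_forall_le_eq_of_iIndepFun (hXm : ∀ i, Measurable (X i)) (hX : iIndepFun X μ)
    (hident : ∀ i j, μ.map (X i) = μ.map (X j)) {S : Set ι} {v w : ι} (hv : v ∈ S)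
    (hw : w ∈ S) : μ {ω | ∀ u ∈ S, X u ω ≤ X v ω} = μ {ω | ∀ u ∈ S, X u ω ≤ X w ω} := by
  set σ := Equiv.swap v w
  have hσS : ∀ u ∈ S, σ u ∈ S := by
    intro u hu
    rw [Equiv.swap_apply_def]
    split_ifs <;> assumption
  have hA := measurableSet_setOf_forall_le S w
  have hswap : {ω | ∀ u ∈ S, X u ω ≤ X v ω} = {ω | ∀ u ∈ S, X (σ u) ω ≤ X (σ w) ω} := by
    ext ω
    rw [Set.mem_ofPred_eq, Set.mem_ofPred_eq, Equiv.swap_apply_right]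
    refine ⟨fun h u hu => h (σ u) (hσS u hu), fun h u hu => ?_⟩
    simpa [σ, Equiv.swap_apply_self] using h (σ u) (hσS u hu)
  rw [hswap]
  calc μ {ω | ∀ u ∈ S, X (σ u) ω ≤ X (σ w) ω}
      = μ.map (fun ω i => X (σ i) ω) {x | ∀ u ∈ S, x u ≤ x w} :=
        (Measure.map_apply (measurable_pi_lambda _ fun i => hXm (σ i)) hA).symm
    _ = μ {ω | ∀ u ∈ S, X u ω ≤ X w ω} := by
        rw [map_fun_perm_eq_of_iIndepFun hXm hX hident,
          Measure.map_apply (measurable_pi_lambda _ hXm) hA]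
        rfl

lemma one_le_ncard_mul_measureReal_forall_le [IsProbabilityMeasure μ]
    (hXm : ∀ i, Measurable (X i)) (hX : iIndepFun X μ)
    (hident : ∀ i j, μ.map (X i) = μ.map (X j)) {S : Set ι} {v : ι}
    (hv : v ∈ S) : 1 ≤ S.ncard * μ.real {ω | ∀ u ∈ S, X u ω ≤ X v ω} := by
  classical
  have hcover : (⋃ w ∈ S.toFinset, {ω | ∀ u ∈ S, X u ω ≤ X w ω}) = Set.univ := by
    refine Set.eq_univ_of_forall fun ω => ?_
    obtain ⟨w, hw, hmax⟩ := S.exists_max_image (fun u => X u ω) S.toFinite ⟨v, hv⟩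
    exact Set.mem_biUnion (Set.mem_toFinset.mpr hw) hmax
  calc (1 : ℝ) = μ.real (⋃ w ∈ S.toFinset, {ω | ∀ u ∈ S, X u ω ≤ X w ω}) := by
        rw [hcover, probReal_univ]
    _ ≤ ∑ w ∈ S.toFinset, μ.real {ω | ∀ u ∈ S, X u ω ≤ X w ω} :=
        measureReal_biUnion_finset_le _ _
    _ = S.ncard * μ.real {ω | ∀ u ∈ S, X u ω ≤ X v ω} := by
        rw [Set.ncard_eq_toFinset_card', ← nsmul_eq_mul, ← Finset.sum_const]
        refine Finset.sum_congr rfl fun w hw => ?_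
        rw [measureReal_def, measureReal_def, measure_forall_le_eq_of_iIndepFun hXm hX hident
          (Set.mem_toFinset.mp hw) hv]

end Exchangeability

section Exposure

variable {V Ω : Type*} {G : SimpleGraph V} {X : V → Ω → ℝ} {Z : V → Ω → Bool}

lemma setOf_forall_le_inter_subset_exposure (b : Bool) (i : V) :
    {ω | ∀ u ∈ hopBall G i 2, X u ω ≤ X i ω} ∩ {ω | Z i ω = b} ⊆ exposure G X Z b i :=
  fun _ ⟨hmax, hz⟩ _ hj => ⟨i, mem_hopBall_comm.mp hj,
    fun u hu => hmax u (hopBall_subset_hopBall_add hj hu), hz⟩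

variable [Finite V]

lemma measurableSet_exposure_of_measurable {m : MeasurableSpace Ω} (b : Bool) (i : V)
    (hX : ∀ v ∈ hopBall G i 2, Measurable (X v)) (hZ : ∀ v ∈ hopBall G i 2, Measurable (Z v)) :
    MeasurableSet (exposure G X Z b i) := by
  have hrw : exposure G X Z b i = ⋂ j ∈ hopBall G i 1, ⋃ v ∈ hopBall G j 1,
      (⋂ u ∈ hopBall G j 1, {ω | X u ω ≤ X v ω}) ∩ {ω | Z v ω = b} := by
    ext ω
    simp only [exposure, Set.mem_iInter, Set.mem_iUnion, Set.mem_inter_iff, Set.mem_ofPred_eq,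
      exists_prop]
  rw [hrw]
  refine .biInter (to_countable _) fun j hj => .biUnion (to_countable _) fun v hv =>
    .inter (.biInter (to_countable _) fun u hu => measurableSet_le ?_ ?_) ?_
  · exact hX u (hopBall_subset_hopBall_add hj hu)
  · exact hX v (hopBall_subset_hopBall_add hj hv)
  · exact hZ v (hopBall_subset_hopBall_add hj hv) (measurableSet_singleton b)

lemma measurableSet_comap_exposure (b : Bool) (i : V) (S : Finset V)
    (hS : hopBall G i 2 ⊆ S) :
    MeasurableSet[MeasurableSpace.comap (fun ω (v : S) => (X v ω, Z v ω)) inferInstance]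
      (exposure G X Z b i) :=
  measurableSet_exposure_of_measurable b i
    (fun v hv => ((measurable_pi_apply (⟨v, hS hv⟩ : S)).comp
      (comap_measurable fun ω (u : S) => (X u ω, Z u ω))).fst)
    (fun v hv => ((measurable_pi_apply (⟨v, hS hv⟩ : S)).comp
      (comap_measurable fun ω (u : S) => (X u ω, Z u ω))).snd)

end Exposure

namespace RGCRModel

variable {V Ω : Type*} [MeasurableSpace Ω] {μ : Measure Ω}
  {X : V → Ω → ℝ} {Z : V → Ω → Bool} {p : ℝ} {G : SimpleGraph V}

lemma measureReal_Z_eq [IsProbabilityMeasure μ] (h : RGCRModel X Z μ p) (hp : 0 ≤ p) (i : V)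
    (b : Bool) :
    μ.real {ω | Z i ω = b} = bif b then p else 1 - p := by
  cases b
  · have hcompl : {ω | Z i ω = false} = {ω | Z i ω = true}ᶜ := by ext; simp
    have hmeas : MeasurableSet {ω | Z i ω = true} := h.meas_Z i (measurableSet_singleton true)
    rw [hcompl, probReal_compl_eq_one_sub hmeas,
      measureReal_def, h.law_Z, ENNReal.toReal_ofReal hp]
    rfl
  · rw [measureReal_def, h.law_Z, ENNReal.toReal_ofReal hp]
    rfl

variable [Fintype V]

lemma measurableSet_exposure (h : RGCRModel X Z μ p) (b : Bool) (i : V) :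
    MeasurableSet (exposure G X Z b i) :=
  measurableSet_exposure_of_measurable b i (fun v _ => h.meas_X v) (fun v _ => h.meas_Z v)

lemma indepSet_exposure [IsProbabilityMeasure μ] (h : RGCRModel X Z μ p) {i j : V}
    (hij : j ∉ hopBall G i 4) (b : Bool) :
    IndepSet (exposure G X Z b i) (exposure G X Z b j) μ := by
  classical
  have hST : Disjoint (hopBall G i 2).toFinset (hopBall G j 2).toFinset :=
    Set.disjoint_toFinset.mpr (disjoint_hopBall_of_notMem hij)
  have hind := (iIndepFun_prodMk_of_indepFun h.meas_X h.meas_Z h.indep_X h.indep_Z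
    h.indep_XZ).indepFun_finset _ _ hST fun v => (h.meas_X v).prodMk (h.meas_Z v)
  rw [IndepFun_iff_Indep] at hind
  exact hind.indepSet_of_measurableSet (measurableSet_comap_exposure b i _ (by simp))
    (measurableSet_comap_exposure b j _ (by simp))

lemma le_ncard_mul_measureReal_exposure [IsProbabilityMeasure μ] (h : RGCRModel X Z μ p)
    (hp : 0 ≤ p) (b : Bool) (i : V) :
    (bif b then p else 1 - p) ≤ (hopBall G i 2).ncard * μ.real (exposure G X Z b i) := by
  classical
  rw [← h.measureReal_Z_eq hp i b]
  set A := {ω | ∀ u ∈ hopBall G i 2, X u ω ≤ X i ω}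
  have hmax : 1 ≤ (hopBall G i 2).ncard * μ.real A :=
    one_le_ncard_mul_measureReal_forall_le h.meas_X h.indep_X
      (fun u v => by rw [h.law_X, h.law_X]) (mem_hopBall_self G i 2)
  have hindep : μ.real (A ∩ {ω | Z i ω = b}) = μ.real A * μ.real {ω | Z i ω = b} := by
    simp only [measureReal_def, ← ENNReal.toReal_mul]
    congr 1
    exact h.indep_XZ.measure_inter_preimage_eq_mul _ _ (measurableSet_setOf_forall_le _ i)
      ((measurable_pi_apply i) (measurableSet_singleton b))
  calc μ.real {ω | Z i ω = b}
      ≤ (hopBall G i 2).ncard * μ.real A * μ.real {ω | Z i ω = b} :=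
        le_mul_of_one_le_left measureReal_nonneg hmax
    _ = (hopBall G i 2).ncard * μ.real (A ∩ {ω | Z i ω = b}) := by rw [hindep, mul_assoc]
    _ ≤ (hopBall G i 2).ncard * μ.real (exposure G X Z b i) :=
        mul_le_mul_of_nonneg_left (measureReal_mono (setOf_forall_le_inter_subset_exposure b i))
          (Nat.cast_nonneg _)

lemma variance_sum_htTerm_exposure_le [IsProbabilityMeasure μ] [DecidableRel G.Adj]
    (h : RGCRModel X Z μ p) (hp : p ∈ Ioo 0 1) {κ : ℝ} (hκ : HasRestrictedGrowth G κ)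
    {Y : V → ℝ} {Ybar : ℝ} (hY : ∀ i, Y i ∈ Icc 0 Ybar) (b : Bool) :
    Var[fun ω => ∑ i, htTerm μ (exposure G X Z b i) (Y i) ω; μ]
      ≤ Fintype.card V *
        (Ybar ^ 2 * ((G.maxDegree : ℝ) + 1) ^ 2 * κ ^ 4 / bif b then p else 1 - p) := by
  classical
  set pb := bif b then p else 1 - p
  set D : ℝ := (G.maxDegree : ℝ) + 1
  have hpb : 0 < pb := by cases b <;> simp [pb, hp.1, hp.2]
  have hπ (i : V) : pb ≤ (hopBall G i 2).ncard * μ.real (exposure G X Z b i) :=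
    h.le_ncard_mul_measureReal_exposure hp.1.le b i
  have hπpos (i : V) : 0 < μ.real (exposure G X Z b i) :=
    pos_of_mul_pos_right (hpb.trans_le (hπ i)) (Nat.cast_nonneg _)
  have hterm (i : V) :
      ((hopBall G i 4).toFinset.card : ℝ) * (Ybar ^ 2 / μ.real (exposure G X Z b i))
        ≤ κ ^ 3 * D * (Ybar ^ 2 * (κ * D) / pb) := by
    have hB2 : ((hopBall G i 2).ncard : ℝ) ≤ κ * D := by
      simpa using hκ.ncard_hopBall_le i (r := 2) (by norm_num)
    have hB4 : ((hopBall G i 4).toFinset.card : ℝ) ≤ κ ^ 3 * D := by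
      rw [← Set.ncard_eq_toFinset_card']
      simpa using hκ.ncard_hopBall_le i (r := 4) (by norm_num)
    refine mul_le_mul hB4 ?_ (by positivity) (by positivity [hκ.pos i])
    rw [div_le_div_iff₀ (hπpos i) hpb]
    calc Ybar ^ 2 * pb ≤ Ybar ^ 2 * ((hopBall G i 2).ncard * μ.real (exposure G X Z b i)) := by
          gcongr; exact hπ i
      _ ≤ Ybar ^ 2 * (κ * D * μ.real (exposure G X Z b i)) := by gcongr
      _ = Ybar ^ 2 * (κ * D) * μ.real (exposure G X Z b i) := by ring
  calc Var[fun ω => ∑ i, htTerm μ (exposure G X Z b i) (Y i) ω; μ]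
      ≤ ∑ i, ((hopBall G i 4).toFinset.card : ℝ) * (Ybar ^ 2 / μ.real (exposure G X Z b i)) :=
        variance_sum_htTerm_le (h.measurableSet_exposure b)
          (fun i => (measureReal_ne_zero_iff (measure_ne_top μ _)).mp (hπpos i).ne') hY _
          fun i j hij => h.indepSet_exposure (by simpa using hij) b
    _ ≤ ∑ _i : V, κ ^ 3 * D * (Ybar ^ 2 * (κ * D) / pb) := Finset.sum_le_sum fun i _ => hterm i
    _ = Fintype.card V * (Ybar ^ 2 * D ^ 2 * κ ^ 4 / pb) := by
        rw [Finset.sum_const, Finset.card_univ, nsmul_eq_mul]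
        ring

end RGCRModel

theorem ht_gate_variance_upper_bound_growth_general
    {V Ω : Type*} [Fintype V] [MeasurableSpace Ω]
    (G : SimpleGraph V) [DecidableRel G.Adj]
    (μ : Measure Ω) [IsProbabilityMeasure μ]
    (X : V → Ω → ℝ) (Z : V → Ω → Bool) (p : ℝ) (hp : p ∈ Set.Ioo (0:ℝ) 1)
    (hmodel : RGCRModel X Z μ p)
    (κ : ℝ)
    (hκ : ∀ (j : V) (r : ℕ), 1 ≤ r →
      ((hopBall G j (r + 1)).ncard : ℝ) ≤ κ * ((hopBall G j r).ncard : ℝ))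
    (Ybar : ℝ) (Y1 Y0 : V → ℝ)
    (hY1 : ∀ i, Y1 i ∈ Set.Icc 0 Ybar) (hY0 : ∀ i, Y0 i ∈ Set.Icc 0 Ybar) :
    variance (fun ω =>
        (Fintype.card V : ℝ)⁻¹ *
          ∑ i : V, Y1 i * (exposure G X Z true i).indicator (fun _ => (1:ℝ)) ω /
            (μ (exposure G X Z true i)).toReal
        - (Fintype.card V : ℝ)⁻¹ *
          ∑ i : V, Y0 i * (exposure G X Z false i).indicator (fun _ => (1:ℝ)) ω /
            (μ (exposure G X Z false i)).toReal) μ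
      ≤ 2 * (Fintype.card V : ℝ)⁻¹ * Ybar ^ 2 * ((G.maxDegree : ℝ) + 1) ^ 2 * κ ^ 4 *
          (p⁻¹ + (1 - p)⁻¹) := by
  set n : ℝ := (Fintype.card V : ℝ)
  set C : ℝ := Ybar ^ 2 * ((G.maxDegree : ℝ) + 1) ^ 2 * κ ^ 4
  have h1 : Var[fun ω => ∑ i, htTerm μ (exposure G X Z true i) (Y1 i) ω; μ] ≤ n * (C / p) :=
    hmodel.variance_sum_htTerm_exposure_le hp hκ hY1 true
  have h0 : Var[fun ω => ∑ i, htTerm μ (exposure G X Z false i) (Y0 i) ω; μ]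
      ≤ n * (C / (1 - p)) :=
    hmodel.variance_sum_htTerm_exposure_le hp hκ hY0 false
  have hmemLp (Y : V → ℝ) (b : Bool) :
      MemLp (fun ω => n⁻¹ * ∑ i, htTerm μ (exposure G X Z b i) (Y i) ω) 2 μ :=
    (memLp_finsetSum _ fun i _ => memLp_htTerm (hmodel.measurableSet_exposure b i)).const_mul _
  calc _ ≤ 2 * Var[fun ω => n⁻¹ * ∑ i, htTerm μ (exposure G X Z true i) (Y1 i) ω; μ]
        + 2 * Var[fun ω => n⁻¹ * ∑ i, htTerm μ (exposure G X Z false i) (Y0 i) ω; μ] :=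
        variance_sub_le_two_mul_add (hmemLp Y1 true) (hmemLp Y0 false)
    _ ≤ 2 * (n⁻¹ ^ 2 * (n * (C / p))) + 2 * (n⁻¹ ^ 2 * (n * (C / (1 - p)))) := by
        rw [variance_const_mul, variance_const_mul]
        gcongr
    _ = 2 * n⁻¹ * Ybar ^ 2 * ((G.maxDegree : ℝ) + 1) ^ 2 * κ ^ 4 * (p⁻¹ + (1 - p)⁻¹) := by
        simp only [C]
        rcases eq_or_ne n 0 with hn | hn
        · simp [hn]
        · field_simp

/-- Under 1-hop-max RGCR with independent cluster-level
randomization at treatment probability `p ∈ (0,1)`, on a graph with `n` nodes,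
maximum degree `d_max` and restricted growth coefficient `κ`, if all potential
outcomes satisfy `0 ≤ Y₁ i, Y₀ i ≤ Ȳ`, then the variance of the Horvitz–Thompson
GATE estimator `τ̂ = μ̂(1) - μ̂(0)` satisfies
`Var(τ̂) ≤ (2/n) · Ȳ² (d_max + 1)² κ⁴ (p⁻¹ + (1-p)⁻¹)`. -/
theorem ht_gate_variance_upper_bound_growth
    {V Ω : Type*} [Fintype V] [MeasurableSpace Ω]
    (G : SimpleGraph V) [DecidableRel G.Adj]
    (μ : Measure Ω) [IsProbabilityMeasure μ]
    (X : V → Ω → ℝ) (Z : V → Ω → Bool) (p : ℝ) (hp : p ∈ Set.Ioo (0:ℝ) 1)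
    (hmodel : RGCRModel X Z μ p)
    (κ : ℝ)
    (hκ : ∀ (j : V) (r : ℕ), 1 ≤ r →
      ((hopBall G j (r + 1)).ncard : ℝ) ≤ κ * ((hopBall G j r).ncard : ℝ))
    (Ybar : ℝ) (Y1 Y0 : V → ℝ)
    (hY1 : ∀ i, Y1 i ∈ Set.Icc 0 Ybar) (hY0 : ∀ i, Y0 i ∈ Set.Icc 0 Ybar)
    (hpos1 : ∀ i : V, 0 < μ (exposure G X Z true i))
    (hpos0 : ∀ i : V, 0 < μ (exposure G X Z false i)) :
    variance (fun ω =>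
        (Fintype.card V : ℝ)⁻¹ *
          ∑ i : V, Y1 i * (exposure G X Z true i).indicator (fun _ => (1:ℝ)) ω /
            (μ (exposure G X Z true i)).toReal
        - (Fintype.card V : ℝ)⁻¹ *
          ∑ i : V, Y0 i * (exposure G X Z false i).indicator (fun _ => (1:ℝ)) ω /
            (μ (exposure G X Z false i)).toReal) μ
      ≤ 2 * (Fintype.card V : ℝ)⁻¹ * Ybar ^ 2 * ((G.maxDegree : ℝ) + 1) ^ 2 * κ ^ 4 *
          (p⁻¹ + (1 - p)⁻¹) :=
  ht_gate_variance_upper_bound_growth_general G μ X Z p hp hmodel κ hκ Ybar Y1 Y0 hY1 hY0
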